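/- arXiv:1605.07853 — 3 statements merged into one kernel-verified Lean document; each statement's English description precedes it below -/
import Mathlib

section
/- The geometric distribution maximizes Shannon entropy among all probability distributions on the nonnegative integers with a given mean λ > 0; i.e., for any random variable X on ℕ with E[X] = λ, H(X) ≤ (1+λ)log(1+λ) − λ log λ, with equality iff X is geometric with parameter λ/(1+λ). -/
open Real InformationTheory

/-! Gibbs' inequality: if `p ≥ 0` and `q > 0` have the same total mass, then
`∑ p log q ≤ ∑ p log p`, with equality iff `p = q`, because the difference is
`∑ q · klFun (p / q)` with `klFun ≥ 0` vanishing only at `1`. For the geometric `q` of mean `λ`,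
`log q n` is affine in `n`, so `∑ p log q = λ log λ - (1 + λ) log (1 + λ)` depends only on the
mean of `p`. The same pointwise comparison bounds `-p log p ≥ 0` by a summable sequence, so a
finite mean forces finite entropy. -/

section Gibbs

lemma mul_klFun_div {x y : ℝ} (hy : 0 < y) :
    y * klFun (x / y) = x * log x - x * log y - (x - y) := by
  rcases eq_or_ne x 0 with rfl | hx
  · simp [klFun_zero]
  · rw [klFun_apply, log_div hx hy.ne']
    field_simp
    ring

lemma mul_klFun_div_nonneg {x y : ℝ} (hx : 0 ≤ x) (hy : 0 < y) : 0 ≤ y * klFun (x / y) :=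
  mul_nonneg hy.le (klFun_nonneg (div_nonneg hx hy.le))

variable {ι : Type*} {p q : ι → ℝ} {s c d : ℝ}

lemma summable_mul_log_self_of_le_one (hp0 : ∀ i, 0 ≤ p i) (hp1 : ∀ i, p i ≤ 1)
    (hq : ∀ i, 0 < q i) (hps : Summable p) (hqs : Summable q)
    (hcross : Summable fun i ↦ p i * log (q i)) :
    Summable fun i ↦ p i * log (p i) := by
  refine (Summable.of_nonneg_of_le (fun i ↦ neg_nonneg.2 (mul_log_nonpos (hp0 i) (hp1 i)))
    (fun i ↦ ?_) ((hcross.neg.add hqs).sub hps)).neg.congr fun i ↦ neg_neg _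
  have := mul_klFun_div_nonneg (hp0 i) (hq i)
  rw [mul_klFun_div (hq i)] at this
  linarith

lemma hasSum_mul_klFun_div (hq : ∀ i, 0 < q i) (hp : HasSum p s) (hq' : HasSum q s)
    (hent : HasSum (fun i ↦ p i * log (p i)) c) (hcross : HasSum (fun i ↦ p i * log (q i)) d) :
    HasSum (fun i ↦ q i * klFun (p i / q i)) (c - d) := by
  simpa [mul_klFun_div (hq _)] using (hent.sub hcross).sub (hp.sub hq')

lemma gibbs_inequality (hp0 : ∀ i, 0 ≤ p i) (hq : ∀ i, 0 < q i) (hp : HasSum p s)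
    (hq' : HasSum q s) (hent : HasSum (fun i ↦ p i * log (p i)) c)
    (hcross : HasSum (fun i ↦ p i * log (q i)) d) : d ≤ c :=
  sub_nonneg.1 <| (hasSum_mul_klFun_div hq hp hq' hent hcross).nonneg fun i ↦
    mul_klFun_div_nonneg (hp0 i) (hq i)

lemma gibbs_inequality_eq_iff (hp0 : ∀ i, 0 ≤ p i) (hq : ∀ i, 0 < q i) (hp : HasSum p s)
    (hq' : HasSum q s) (hent : HasSum (fun i ↦ p i * log (p i)) c)
    (hcross : HasSum (fun i ↦ p i * log (q i)) d) : d = c ↔ p = q := by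
  have hkl := hasSum_mul_klFun_div hq hp hq' hent hcross
  calc d = c ↔ HasSum (fun i ↦ q i * klFun (p i / q i)) 0 := by
        rw [eq_comm, ← sub_eq_zero]
        exact ⟨fun h ↦ h ▸ hkl, hkl.unique⟩
    _ ↔ ∀ i, q i * klFun (p i / q i) = 0 := by
        rw [hasSum_zero_iff_of_nonneg fun i ↦ mul_klFun_div_nonneg (hp0 i) (hq i), funext_iff]
        rfl
    _ ↔ p = q := by
        rw [funext_iff]
        refine forall_congr' fun i ↦ ?_
        rw [mul_eq_zero, or_iff_right (hq i).ne', klFun_eq_zero_iff (div_nonneg (hp0 i) (hq i).le),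
          div_eq_one_iff_eq (hq i).ne']

end Gibbs

noncomputable def geometricMassOfMean (l : ℝ) (n : ℕ) : ℝ := 1 / (1 + l) * (l / (1 + l)) ^ n

section Geometric

variable {l : ℝ}

lemma geometricMassOfMean_pos (hl : 0 < l) (n : ℕ) : 0 < geometricMassOfMean l n := by
  unfold geometricMassOfMean
  positivity

lemma hasSum_geometricMassOfMean (hl : 0 ≤ l) : HasSum (geometricMassOfMean l) 1 := by
  have hratio : l / (1 + l) < 1 := (div_lt_one (by positivity)).2 (by linarith)
  have hsum := (hasSum_geometric_of_lt_one (by positivity) hratio).mul_left (1 / (1 + l))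
  rwa [show 1 / (1 + l) * (1 - l / (1 + l))⁻¹ = 1 by field_simp; ring] at hsum

lemma log_geometricMassOfMean (hl : 0 < l) (n : ℕ) :
    log (geometricMassOfMean l n) = n * log l - (n + 1) * log (1 + l) := by
  rw [geometricMassOfMean, log_mul (by positivity) (by positivity), log_pow,
    log_div hl.ne' (by positivity), one_div, log_inv]
  ring

lemma hasSum_mul_log_geometricMassOfMean (hl : 0 < l) {p : ℕ → ℝ} (hp : HasSum p 1)
    (hmean : HasSum (fun n : ℕ ↦ n * p n) l) :
    HasSum (fun n ↦ p n * log (geometricMassOfMean l n)) (l * log l - (1 + l) * log (1 + l)) := by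
  rw [show l * log l - (1 + l) * log (1 + l) = l * (log l - log (1 + l)) - 1 * log (1 + l) by ring]
  refine ((hmean.mul_right _).sub (hp.mul_right _)).congr_fun fun n ↦ ?_
  rw [log_geometricMassOfMean hl]
  ring

end Geometric

/-- The geometric distribution maximizes Shannon entropy among all
probability distributions on ℕ with a given mean `l > 0`: for any pmf `p` with mean `l`,
`H(p) ≤ (1+l) log (1+l) - l log l`, with equality iff `p` is geometric with
parameter `l/(1+l)`, i.e. `p n = (1/(1+l)) * (l/(1+l))^n`. -/
theorem geometric_maximizes_entropy (l : ℝ) (hl : 0 < l)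
    (p : ℕ → ℝ) (hp0 : ∀ n, 0 ≤ p n) (hp1 : ∑' n : ℕ, p n = 1)
    (hmean : ∑' n : ℕ, (n : ℝ) * p n = l) :
    (-∑' n : ℕ, p n * Real.log (p n)) ≤ (1 + l) * Real.log (1 + l) - l * Real.log l ∧
    ((-∑' n : ℕ, p n * Real.log (p n)) = (1 + l) * Real.log (1 + l) - l * Real.log l ↔
      ∀ n, p n = (1 / (1 + l)) * (l / (1 + l)) ^ n) := by
  have hp : HasSum p 1 := by
    refine hp1 ▸ Summable.hasSum ?_
    by_contra h
    simp [tsum_eq_zero_of_not_summable h] at hp1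
  have hpmean : HasSum (fun n : ℕ ↦ n * p n) l := by
    refine hmean ▸ Summable.hasSum ?_
    by_contra h
    exact hl.ne' (hmean ▸ tsum_eq_zero_of_not_summable h)
  have hq := geometricMassOfMean_pos hl
  have hqsum := hasSum_geometricMassOfMean hl.le
  have hcross := hasSum_mul_log_geometricMassOfMean hl hp hpmean
  have hent : HasSum (fun n ↦ p n * log (p n)) (∑' n, p n * log (p n)) :=
    (summable_mul_log_self_of_le_one hp0 (fun n ↦ le_hasSum hp n fun m _ ↦ hp0 m) hq
      hp.summable hqsum.summable hcross.summable).hasSum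
  have hle := gibbs_inequality hp0 hq hp hqsum hent hcross
  have heq := gibbs_inequality_eq_iff hp0 hq hp hqsum hent hcross
  refine ⟨by linarith, ?_⟩
  change _ ↔ ∀ n, p n = geometricMassOfMean l n
  rw [← funext_iff, ← heq]
  constructor <;> intro h <;> linarith
end

section
/- The entropy function of the Poisson distribution λ ↦ H(Poisson(λ)) is strictly increasing in λ on (0, ∞). -/
/-!
Write `p_λ(n) = e^{-λ} λ^n / n!` and `E_λ` for the expectation under `Poisson(λ)`. Since
`-log p_λ(n) = λ - n log λ + log n!` and `E_λ[N] = λ`, the entropy is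
`H(λ) = λ - λ log λ + E_λ[log N!]`. Differentiating the weights gives
`d/dλ E_λ[f(N)] = E_λ[f(N+1) - f(N)]`, hence `H'(λ) = E_λ[log (N+1)] - log λ`.
By the Stein identity `E_λ[N f(N)] = λ E_λ[f(N+1)]`, `λ E_λ[log (N+1)] = E_λ[N log N]`, and the
pointwise bound `n log n ≥ n log λ + n - λ`, strict at `n = 0`, gives `E_λ[N log N] > λ log λ`.
-/

open Real
open scoped Nat

section ExponentialGeneratingFunction

variable {f : ℕ → ℝ} {A B : ℝ}

theorem summable_mul_pow_div_factorial (hf : ∀ n, |f n| ≤ A * B ^ n) (x : ℝ) :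
    Summable fun n => f n * (x ^ n / n !) := by
  refine .of_norm_bounded ((summable_pow_div_factorial (B * |x|)).mul_left A) fun n => ?_
  rw [norm_mul, norm_div, norm_pow, Real.norm_eq_abs, Real.norm_eq_abs, Real.norm_natCast,
    mul_pow, mul_div_assoc, ← mul_assoc]
  exact mul_le_mul_of_nonneg_right (hf n) (by positivity)

theorem hasDerivAt_tsum_mul_pow_div_factorial (hf : ∀ n, |f n| ≤ A * B ^ n) (x : ℝ) :
    HasDerivAt (fun y => ∑' n, f n * (y ^ n / n !)) (∑' n, f (n + 1) * (x ^ n / n !)) x := by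
  obtain ⟨R, hR, hx⟩ : ∃ R, 1 ≤ R ∧ x ∈ Set.Ioo (-R) R :=
    ⟨|x| + 1, le_add_of_nonneg_left (abs_nonneg x), abs_lt.1 (lt_add_one _)⟩
  have hbound : ∀ n, ∀ y ∈ Set.Ioo (-R) R,
      ‖f n * (n * y ^ (n - 1) / n !)‖ ≤ A * ((2 * B * R) ^ n / n !) := by
    intro n y hy
    have hpow : |y| ^ (n - 1) ≤ R ^ n :=
      (pow_le_pow_left₀ (abs_nonneg y) (abs_le.2 ⟨hy.1.le, hy.2.le⟩) _).trans
        (pow_le_pow_right₀ hR (n.sub_le 1))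
    have hn : (n : ℝ) ≤ 2 ^ n := by exact_mod_cast n.lt_two_pow_self.le
    calc ‖f n * (n * y ^ (n - 1) / n !)‖ = |f n| * (n * |y| ^ (n - 1) / n !) := by
          simp
      _ ≤ A * B ^ n * (2 ^ n * R ^ n / n !) := by
          gcongr
          · exact (abs_nonneg _).trans (hf n)
          · exact hf n
      _ = A * ((2 * B * R) ^ n / n !) := by ring
  have hsum : Summable fun n => f n * (n * x ^ (n - 1) / n !) :=
    .of_norm_bounded ((summable_pow_div_factorial _).mul_left A) fun n => hbound n x hx
  have h := hasDerivAt_tsum_of_isPreconnected ((summable_pow_div_factorial _).mul_left A)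
    isOpen_Ioo isPreconnected_Ioo
    (fun n y _ => ((hasDerivAt_pow n y).div_const (n ! : ℝ)).const_mul (f n)) hbound hx
    (summable_mul_pow_div_factorial hf x) hx
  have hval : ∑' n, f n * (n * x ^ (n - 1) / n !) = ∑' n, f (n + 1) * (x ^ n / n !) := by
    rw [hsum.tsum_eq_zero_add]
    simp only [CharP.cast_eq_zero, zero_mul, zero_div, mul_zero, zero_add]
    refine tsum_congr fun n => ?_
    rw [Nat.factorial_succ, Nat.cast_mul, add_tsub_cancel_right,
      mul_div_mul_left _ _ (by positivity)]
  exact hval ▸ h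

end ExponentialGeneratingFunction

noncomputable def poissonWeight (l : ℝ) (n : ℕ) : ℝ := exp (-l) * l ^ n / n !

noncomputable def poissonMean (f : ℕ → ℝ) (l : ℝ) : ℝ := ∑' n, f n * poissonWeight l n

theorem hasSum_poissonWeight (l : ℝ) : HasSum (poissonWeight l) 1 := by
  have h := (NormedSpace.expSeries_div_hasSum_exp l).mul_left (exp (-l))
  rw [← exp_eq_exp_ℝ, ← exp_add, neg_add_cancel, exp_zero] at h
  exact h.congr_fun fun n => by simp only [poissonWeight, mul_div_assoc]

theorem poissonMean_eq_exp_mul_tsum (f : ℕ → ℝ) (l : ℝ) :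
    poissonMean f l = exp (-l) * ∑' n, f n * (l ^ n / n !) := by
  rw [poissonMean, ← tsum_mul_left]
  refine tsum_congr fun n => ?_
  simp only [poissonWeight]
  ring

section PoissonMean

variable {f : ℕ → ℝ} {A B : ℝ}

theorem hasSum_poissonMean (hf : ∀ n, |f n| ≤ A * B ^ n) (l : ℝ) :
    HasSum (fun n => f n * poissonWeight l n) (poissonMean f l) := by
  refine (((summable_mul_pow_div_factorial hf l).mul_left (exp (-l))).congr fun n => ?_).hasSum
  simp only [poissonWeight]
  ring

theorem abs_comp_succ_le (hf : ∀ n, |f n| ≤ A * B ^ n) (n : ℕ) :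
    |f (n + 1)| ≤ A * B * B ^ n := by
  rw [mul_assoc, ← pow_succ']
  exact hf (n + 1)

theorem hasDerivAt_poissonMean (hf : ∀ n, |f n| ≤ A * B ^ n) (l : ℝ) :
    HasDerivAt (poissonMean f) (poissonMean (fun n => f (n + 1) - f n) l) l := by
  have hsub : poissonMean (fun n => f (n + 1) - f n) l =
      poissonMean (fun n => f (n + 1)) l - poissonMean f l := by
    simp_rw [poissonMean, sub_mul]
    exact ((hasSum_poissonMean (abs_comp_succ_le hf) l).sub (hasSum_poissonMean hf l)).tsum_eq
  rw [funext (poissonMean_eq_exp_mul_tsum f), hsub, poissonMean_eq_exp_mul_tsum,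
    poissonMean_eq_exp_mul_tsum]
  exact ((hasDerivAt_neg l).exp.mul (hasDerivAt_tsum_mul_pow_div_factorial hf l)).congr_deriv
    (by ring)

theorem hasSum_natCast_mul_mul_poissonWeight (hf : ∀ n, |f n| ≤ A * B ^ n) (l : ℝ) :
    HasSum (fun n : ℕ => (n : ℝ) * f n * poissonWeight l n)
      (l * poissonMean (fun n => f (n + 1)) l) := by
  have hshift : HasSum (fun n => ((n + 1 : ℕ) : ℝ) * f (n + 1) * poissonWeight l (n + 1))
      (l * poissonMean (fun n => f (n + 1)) l) :=
    ((hasSum_poissonMean (abs_comp_succ_le hf) l).mul_left l).congr_fun fun n => by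
      simp only [poissonWeight, Nat.factorial_succ, Nat.cast_mul, pow_succ]
      field_simp
  simpa only [CharP.cast_eq_zero, zero_mul, zero_add] using
    HasSum.zero_add (f := fun n : ℕ => (n : ℝ) * f n * poissonWeight l n) hshift

end PoissonMean

theorem hasSum_natCast_mul_poissonWeight (l : ℝ) :
    HasSum (fun n : ℕ => (n : ℝ) * poissonWeight l n) l := by
  simpa [poissonMean, (hasSum_poissonWeight l).tsum_eq] using
    hasSum_natCast_mul_mul_poissonWeight (f := fun _ => 1) (A := 1) (B := 1) (by simp) l

theorem abs_log_natCast_le_two_pow (n : ℕ) : |log n| ≤ 2 ^ n := by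
  rw [abs_of_nonneg (log_natCast_nonneg n)]
  exact (log_le_self n.cast_nonneg).trans (by exact_mod_cast n.lt_two_pow_self.le)

theorem abs_log_factorial_le_four_pow (n : ℕ) : |log n !| ≤ 4 ^ n := by
  rw [abs_of_nonneg (log_natCast_nonneg _)]
  calc log n ! ≤ log ((n ^ n : ℕ) : ℝ) :=
        log_le_log (by positivity) (by exact_mod_cast n.factorial_le_pow)
    _ = n * log n := by rw [Nat.cast_pow, log_pow]
    _ ≤ 2 ^ n * 2 ^ n := by
        gcongr
        · exact_mod_cast n.lt_two_pow_self.le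
        · exact le_of_abs_le (abs_log_natCast_le_two_pow n)
    _ = 4 ^ n := by rw [← mul_pow]; norm_num

theorem mul_log_add_sub_le_mul_log {x y : ℝ} (hx : 0 ≤ x) (hy : 0 < y) :
    x * log y + x - y ≤ x * log x := by
  rcases hx.eq_or_lt with rfl | hx
  · simpa using hy.le
  have h := mul_le_mul_of_nonneg_left (log_le_sub_one_of_pos (div_pos hy hx)) hx.le
  rw [log_div hy.ne' hx.ne', mul_sub, mul_sub, mul_div_cancel₀ _ hx.ne'] at h
  linarith

noncomputable def poissonEntropy (l : ℝ) : ℝ :=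
  -∑' n, poissonWeight l n * log (poissonWeight l n)

theorem poissonEntropy_eq {l : ℝ} (hl : 0 < l) :
    poissonEntropy l = l - l * log l + poissonMean (fun n => log n !) l := by
  have hlog (n : ℕ) : log (poissonWeight l n) = -l + n * log l - log n ! := by
    rw [poissonWeight, log_div (by positivity) (by positivity), log_mul (by positivity)
      (by positivity), log_exp, log_pow]
  have h : HasSum (fun n => poissonWeight l n * log (poissonWeight l n))
      (-l * 1 + log l * l - poissonMean (fun n => log n !) l) :=
    (((hasSum_poissonWeight l).mul_left (-l)).add
      ((hasSum_natCast_mul_poissonWeight l).mul_left (log l))).sub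
      (hasSum_poissonMean (A := 1) (B := 4) (by simpa using abs_log_factorial_le_four_pow) l)
      |>.congr_fun fun n => by rw [hlog]; ring
  rw [poissonEntropy, h.tsum_eq]
  ring

theorem hasDerivAt_poissonEntropy {l : ℝ} (hl : 0 < l) :
    HasDerivAt poissonEntropy (poissonMean (fun n : ℕ => log (n + 1)) l - log l) l := by
  have hstep : (fun n : ℕ => log (n + 1)! - log n !) = fun n : ℕ => log (n + 1) :=
    funext fun n => by
      rw [Nat.factorial_succ, Nat.cast_mul, log_mul (by positivity) (by positivity),
        Nat.cast_add_one]
      ring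
  have h := ((hasDerivAt_id' l).sub (hasDerivAt_mul_log hl.ne')).add
    (hasDerivAt_poissonMean (A := 1) (B := 4) (by simpa using abs_log_factorial_le_four_pow) l)
  rw [hstep] at h
  refine (h.congr_deriv (by ring)).congr_of_eventuallyEq ?_
  filter_upwards [Ioi_mem_nhds hl] with x hx using poissonEntropy_eq hx

theorem log_lt_poissonMean_log_succ {l : ℝ} (hl : 0 < l) :
    log l < poissonMean (fun n : ℕ => log (n + 1)) l := by
  have hstein := hasSum_natCast_mul_mul_poissonWeight (f := fun n => log n) (A := 1) (B := 2)
    (by simpa using abs_log_natCast_le_two_pow) l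
  have hlin : HasSum (fun n : ℕ => (n * log l + n - l) * poissonWeight l n) (l * log l) := by
    have h := ((hasSum_natCast_mul_poissonWeight l).mul_left (log l + 1)).sub
      ((hasSum_poissonWeight l).mul_left l)
    rw [show (log l + 1) * l - l * 1 = l * log l by ring] at h
    exact h.congr_fun fun n => by ring
  have hlt := hasSum_lt (i := 0)
    (fun n => mul_le_mul_of_nonneg_right (mul_log_add_sub_le_mul_log n.cast_nonneg hl)
      (by unfold poissonWeight; positivity))
    (by simpa [poissonWeight] using mul_pos hl (exp_pos (-l))) hlin hstein
  push_cast at hlt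
  exact lt_of_mul_lt_mul_left hlt hl.le

/-- The entropy function of the Poisson distribution
`l ↦ H(Poisson(l)) = -∑_n (e^{-l} l^n / n!) log (e^{-l} l^n / n!)`
is strictly increasing in `l` on `(0, ∞)`. -/
theorem poisson_entropy_strictMono :
    StrictMonoOn
      (fun l : ℝ => -∑' n : ℕ,
        (Real.exp (-l) * l ^ n / n.factorial) *
          Real.log (Real.exp (-l) * l ^ n / n.factorial))
      (Set.Ioi (0 : ℝ)) := by
  refine strictMonoOn_of_deriv_pos (f := poissonEntropy) (convex_Ioi 0)
    (fun l hl => (hasDerivAt_poissonEntropy hl).continuousAt.continuousWithinAt) fun l hl => ?_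
  rw [interior_Ioi] at hl
  rw [(hasDerivAt_poissonEntropy hl).deriv]
  exact sub_pos.2 (log_lt_poissonMean_log_succ hl)
end

section
/- The transform T from discrete pmfs on ℕ to circularly-symmetric densities on ℂ, given by p_{X_c}(r) = (1/π) ∑_{n=0}^∞ p_X[n] e^{−|r|²} |r|^{2n} / n!, maps any pmf to a valid probability density on ℂ (nonnegative, integrating to 1), and is injective. -/
open MeasureTheory

/-- The transform `T` from pmfs on ℕ to circularly-symmetric densities on ℂ:
`T(p)(r) = (1/π) ∑_n p[n] e^{-|r|²} |r|^{2n} / n!`. -/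
noncomputable def numberToHusimi (p : ℕ → ℝ) (r : ℂ) : ℝ :=
  (1 / Real.pi) * ∑' n : ℕ,
    p n * (Real.exp (-(‖r‖ ^ 2)) * ‖r‖ ^ (2 * n) / n.factorial)

/-!
On the circle `‖r‖² = s` the density equals `π⁻¹ e^{-s} ∑ p[n] sⁿ / n!`. Each term
`e^{-‖r‖²} ‖r‖^{2n} / n!` is a Gamma integral worth `π`, and the series of their integrals
converges absolutely, so `T p` integrates to `∑ p[n] = 1`. For injectivity, bounded
coefficients make `∑ p[n] sⁿ / n!` a power series with positive radius, and two such series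
agreeing for small `s > 0` have the same coefficients by the isolated zeros principle.
-/

open Real Filter Topology FormalMultilinearSeries
open scoped Nat

theorem summable_of_tsum_ne_zero {ι α : Type*} [AddCommMonoid α] [TopologicalSpace α]
    {f : ι → α} (h : ∑' i, f i ≠ 0) : Summable f :=
  by_contra fun hf => h (tsum_eq_zero_of_not_summable hf)

theorem abs_le_one_of_tsum_eq_one {p : ℕ → ℝ} (hp0 : ∀ n, 0 ≤ p n) (hp1 : ∑' n, p n = 1)
    (n : ℕ) : |p n| ≤ 1 := by
  rw [abs_of_nonneg (hp0 n), ← hp1]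
  exact (summable_of_tsum_ne_zero (hp1 ▸ one_ne_zero)).le_tsum n fun m _ => hp0 m

theorem ofScalars_eq_of_eventually_tsum_eq_nhdsGT {a b : ℕ → ℝ}
    (ha : 0 < (ofScalars ℝ a).radius) (hb : 0 < (ofScalars ℝ b).radius)
    (h : ∀ᶠ s in 𝓝[>] 0, ∑' n, a n * s ^ n = ∑' n, b n * s ^ n) : a = b := by
  have hfa := ((ofScalars ℝ a).hasFPowerSeriesOnBall ha).hasFPowerSeriesAt
  have hfb := ((ofScalars ℝ b).hasFPowerSeriesOnBall hb).hasFPowerSeriesAt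
  have hfreq : ∃ᶠ s in 𝓝[≠] (0 : ℝ), (ofScalars ℝ a).sum s = (ofScalars ℝ b).sum s := by
    refine (h.frequently.filter_mono (nhdsGT_le_nhdsNE 0)).mono fun s hs => ?_
    simpa only [FormalMultilinearSeries.sum, ofScalars_apply_eq, smul_eq_mul] using hs
  have heq := (hfa.analyticAt.frequently_eq_iff_eventually_eq hfb.analyticAt).mp hfreq
  exact ofScalars_series_injective ℝ ℝ (hfa.eq_formalMultilinearSeries_of_eventually hfb heq)

theorem one_le_radius_ofScalars_of_abs_le {c : ℕ → ℝ} {C : ℝ} (hc : ∀ n, |c n| ≤ C) :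
    1 ≤ (ofScalars ℝ c).radius :=
  le_radius_of_bound _ C fun n => by simpa [ofScalars_norm] using hc n

theorem integral_norm_pow_mul_exp_neg_sq (n : ℕ) :
    ∫ r : ℂ, ‖r‖ ^ (2 * n) * exp (-‖r‖ ^ 2) = π * (n ! : ℝ) := by
  have h := Complex.integral_rpow_mul_exp_neg_rpow (p := 2) (q := (2 * n : ℕ)) one_le_two
    (by linarith [(Nat.cast_nonneg (2 * n) : (0 : ℝ) ≤ _)])
  simp only [rpow_natCast, rpow_two] at h
  rw [h, show ((2 * n : ℕ) : ℝ) + 2 = 2 * (n + 1) by push_cast; ring,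
    mul_div_cancel_left₀ _ two_ne_zero, mul_div_cancel_left₀ _ two_ne_zero,
    Gamma_nat_eq_factorial]

theorem integrable_norm_pow_mul_exp_neg_sq (n : ℕ) :
    Integrable fun r : ℂ => ‖r‖ ^ (2 * n) * exp (-‖r‖ ^ 2) :=
  .of_integral_ne_zero <| by rw [integral_norm_pow_mul_exp_neg_sq]; positivity

theorem integral_div_factorial_mul_norm_pow_mul_exp_neg_sq (c : ℝ) (n : ℕ) :
    ∫ r : ℂ, c / n ! * (‖r‖ ^ (2 * n) * exp (-‖r‖ ^ 2)) = π * c := by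
  rw [integral_const_mul, integral_norm_pow_mul_exp_neg_sq]
  field_simp

theorem integral_numberToHusimi {p : ℕ → ℝ} (hp : Summable p) :
    ∫ r, numberToHusimi p r = ∑' n, p n := by
  have hnorm : ∀ n (r : ℂ), ‖p n / n ! * (‖r‖ ^ (2 * n) * exp (-‖r‖ ^ 2))‖ =
      |p n| / n ! * (‖r‖ ^ (2 * n) * exp (-‖r‖ ^ 2)) := fun n r => by
    rw [Real.norm_eq_abs, abs_mul, abs_div, Nat.abs_cast,
      abs_of_nonneg (a := _ * _) (by positivity)]
  have hsum : Summable fun n => ∫ r : ℂ, ‖p n / n ! * (‖r‖ ^ (2 * n) * exp (-‖r‖ ^ 2))‖ := by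
    simpa only [hnorm, integral_div_factorial_mul_norm_pow_mul_exp_neg_sq] using
      hp.abs.mul_left π
  calc ∫ r, numberToHusimi p r
      = 1 / π * ∫ r : ℂ, ∑' n, p n / n ! * (‖r‖ ^ (2 * n) * exp (-‖r‖ ^ 2)) := by
        simp only [numberToHusimi, integral_const_mul]
        congr 2 with r
        congr 1 with n
        ring
    _ = 1 / π * ∑' n, π * p n := by
        rw [← integral_tsum_of_summable_integral_norm
          (fun n => (integrable_norm_pow_mul_exp_neg_sq n).const_mul _) hsum]
        simp only [integral_div_factorial_mul_norm_pow_mul_exp_neg_sq]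
    _ = ∑' n, p n := by
        rw [tsum_mul_left]
        field_simp

theorem numberToHusimi_nonneg {p : ℕ → ℝ} (hp : ∀ n, 0 ≤ p n) (r : ℂ) :
    0 ≤ numberToHusimi p r :=
  mul_nonneg (by positivity) (tsum_nonneg fun n => mul_nonneg (hp n) (by positivity))

theorem numberToHusimi_ofReal_sqrt (p : ℕ → ℝ) {s : ℝ} (hs : 0 ≤ s) :
    numberToHusimi p (√s : ℂ) = 1 / π * exp (-s) * ∑' n, p n / n ! * s ^ n := by
  simp only [numberToHusimi, Complex.norm_of_nonneg (sqrt_nonneg s), pow_mul, sq_sqrt hs]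
  rw [mul_assoc, ← tsum_mul_left (a := exp (-s))]
  congr 2 with n
  ring

theorem numberToHusimi_injective_of_abs_le {p q : ℕ → ℝ} {C : ℝ} (hp : ∀ n, |p n| ≤ C)
    (hq : ∀ n, |q n| ≤ C) (h : numberToHusimi p = numberToHusimi q) : p = q := by
  have hradius : ∀ c : ℕ → ℝ, (∀ n, |c n| ≤ C) → 0 < (ofScalars ℝ fun n => c n / n !).radius :=
    fun c hc => zero_lt_one.trans_le <| one_le_radius_ofScalars_of_abs_le fun n => by
      rw [abs_div, Nat.abs_cast]
      exact (div_le_self (abs_nonneg _) (Nat.one_le_cast.mpr n.factorial_pos)).trans (hc n)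
  have hcoeff : (fun n => p n / n !) = fun n => q n / n ! := by
    refine ofScalars_eq_of_eventually_tsum_eq_nhdsGT (hradius p hp) (hradius q hq)
      (eventually_nhdsWithin_of_forall fun s (hs : 0 < s) => ?_)
    have hs' := congrFun h (√s : ℂ)
    rw [numberToHusimi_ofReal_sqrt p hs.le, numberToHusimi_ofReal_sqrt q hs.le] at hs'
    exact mul_left_cancel₀ (by positivity) hs'
  funext n
  exact (div_left_inj' (by positivity)).mp (congrFun hcoeff n)

/-- The transform `T` maps any pmf on ℕ to a valid probability
density on ℂ (nonnegative and integrating to 1 w.r.t. Lebesgue measure on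
ℂ ≅ ℝ²), and is injective on pmfs. -/
theorem numberToHusimi_isDensity_and_injective
    (p : ℕ → ℝ) (hp0 : ∀ n, 0 ≤ p n) (hp1 : ∑' n : ℕ, p n = 1) :
    (∀ r : ℂ, 0 ≤ numberToHusimi p r) ∧
    (∫ r : ℂ, numberToHusimi p r = 1) ∧
    (∀ q : ℕ → ℝ, (∀ n, 0 ≤ q n) → (∑' n : ℕ, q n = 1) →
      numberToHusimi p = numberToHusimi q → p = q) :=
  ⟨numberToHusimi_nonneg hp0,
    hp1 ▸ integral_numberToHusimi (summable_of_tsum_ne_zero (hp1 ▸ one_ne_zero)),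
    fun _ hq0 hq1 => numberToHusimi_injective_of_abs_le (abs_le_one_of_tsum_eq_one hp0 hp1)
      (abs_le_one_of_tsum_eq_one hq0 hq1)⟩
end
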